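/- arXiv:1207.5114 — 5 statements merged into one kernel-verified Lean document; each statement's English description precedes it below -/
import Mathlib

section
/- Let p₁, p₂, p₃, p₄ ∈ ℂ³ be nonzero null vectors (⟨pᵢ,pᵢ⟩ = 0) whose pairwise Hermitian pairings are nonzero (⟨pᵢ,pⱼ⟩ ≠ 0 for i ≠ j). Setting 𝕏₁ = 𝕏(p₁,p₂,p₃,p₄), 𝕏₂ = 𝕏(p₁,p₃,p₂,p₄), 𝕏₃ = 𝕏(p₂,p₃,p₁,p₄), one has 2|𝕏₁|²·Re(𝕏₃) = |𝕏₁|² + |𝕏₂|² − 2Re(𝕏₁ + 𝕏₂) + 1. -/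
/-- The Hermitian form of signature (2,1) on ℂ³:
`⟨z,w⟩ = z₁·conj(w₃) + z₂·conj(w₂) + z₃·conj(w₁)`. -/
noncomputable def herm (z w : Fin 3 → ℂ) : ℂ :=
  z 0 * starRingEnd ℂ (w 2) + z 1 * starRingEnd ℂ (w 1) + z 2 * starRingEnd ℂ (w 0)

/-- The Korányi–Reimann complex cross-ratio. -/
noncomputable def crossRatio (p₁ p₂ p₃ p₄ : Fin 3 → ℂ) : ℂ :=
  (herm p₃ p₁ * herm p₄ p₂) / (herm p₄ p₁ * herm p₃ p₂)

/-!
Four vectors in ℂ³ are linearly dependent, so their Gram matrix `(⟨pᵢ,pⱼ⟩)` is singular. For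
null vectors its diagonal vanishes, and the determinant of a 4 × 4 matrix with zero diagonal is
a signed sum over the nine derangements of `Fin 4`. Clearing the denominators of the cross-ratios,
the relation becomes exactly this determinant, so it holds for any singular zero-diagonal matrix
over a field once the cross-ratios of both the matrix and its transpose are plugged in; the
Hermitian symmetry `⟨w,z⟩ = conj ⟨z,w⟩` identifies the transposed cross-ratios with the conjugates.
-/

open scoped Matrix ComplexConjugate

namespace Matrix

variable {K : Type*} [Field K]

theorem det_fin_four_of_diag_eq_zero {R : Type*} [CommRing R] (M : Matrix (Fin 4) (Fin 4) R)
    (hdiag : ∀ i, M i i = 0) :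
    M.det = M 0 1 * M 1 0 * M 2 3 * M 3 2 + M 0 2 * M 2 0 * M 1 3 * M 3 1
        + M 0 3 * M 3 0 * M 1 2 * M 2 1
      - (M 0 1 * M 1 2 * M 2 3 * M 3 0 + M 0 1 * M 1 3 * M 3 2 * M 2 0
        + M 0 2 * M 2 1 * M 1 3 * M 3 0 + M 0 2 * M 2 3 * M 3 1 * M 1 0
        + M 0 3 * M 3 1 * M 1 2 * M 2 0 + M 0 3 * M 3 2 * M 2 1 * M 1 0) := by
  simp [det_succ_row_zero, Fin.sum_univ_succ, Fin.succAbove, hdiag]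
  ring

/-- The cross-ratio of four points read off from the matrix `M i j = ⟨pᵢ,pⱼ⟩` of their pairings. -/
def crossRatio (M : Matrix (Fin 4) (Fin 4) K) (i j k l : Fin 4) : K :=
  M k i * M l j / (M l i * M k j)

theorem crossRatio_relation (M : Matrix (Fin 4) (Fin 4) K) (hdiag : ∀ i, M i i = 0)
    (hdet : M.det = 0) (hM : ∀ i j, i ≠ j → M i j ≠ 0) :
    M.crossRatio 0 1 2 3 * Mᵀ.crossRatio 0 1 2 3 * (M.crossRatio 1 2 0 3 + Mᵀ.crossRatio 1 2 0 3)
      = M.crossRatio 0 1 2 3 * Mᵀ.crossRatio 0 1 2 3 + M.crossRatio 0 2 1 3 * Mᵀ.crossRatio 0 2 1 3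
        - (M.crossRatio 0 1 2 3 + Mᵀ.crossRatio 0 1 2 3 + M.crossRatio 0 2 1 3
          + Mᵀ.crossRatio 0 2 1 3) + 1 := by
  rw [det_fin_four_of_diag_eq_zero M hdiag] at hdet
  have h02 := hM 0 2 (by decide)
  have h20 := hM 2 0 (by decide)
  have h03 := hM 0 3 (by decide)
  have h30 := hM 3 0 (by decide)
  have h12 := hM 1 2 (by decide)
  have h21 := hM 2 1 (by decide)
  have h13 := hM 1 3 (by decide)
  have h31 := hM 3 1 (by decide)
  simp only [crossRatio, transpose_apply]
  field_simp
  linear_combination -hdet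

end Matrix

theorem conj_herm (z w : Fin 3 → ℂ) : conj (herm z w) = herm w z := by
  simp only [herm, map_add, map_mul, Complex.conj_conj]
  ring

theorem herm_sum_smul_left {ι : Type*} [Fintype ι] (g : ι → ℂ) (p : ι → Fin 3 → ℂ)
    (w : Fin 3 → ℂ) : herm (∑ i, g i • p i) w = ∑ i, g i * herm (p i) w := by
  simp only [herm, Finset.sum_apply, Pi.smul_apply, smul_eq_mul, Finset.sum_mul,
    ← Finset.sum_add_distrib, mul_add, mul_assoc]

noncomputable def hermGram {ι : Type*} (p : ι → Fin 3 → ℂ) : Matrix ι ι ℂ :=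
  Matrix.of fun i j => herm (p i) (p j)

theorem det_hermGram_eq_zero {ι : Type*} [Fintype ι] [DecidableEq ι] (p : ι → Fin 3 → ℂ)
    (hcard : 3 < Fintype.card ι) : (hermGram p).det = 0 := by
  have hdep : ¬ LinearIndependent ℂ p := fun h => by
    simpa using hcard.trans_le h.fintype_card_le_finrank
  obtain ⟨g, hsum, i, hgi⟩ := Fintype.not_linearIndependent_iff.mp hdep
  refine Matrix.exists_vecMul_eq_zero_iff.mp ⟨g, fun hg => hgi (congrFun hg i), funext fun j => ?_⟩
  calc (g ᵥ* hermGram p) j = herm (∑ i, g i • p i) (p j) := by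
        simp [Matrix.vecMul, dotProduct, hermGram, herm_sum_smul_left]
    _ = 0 := by rw [hsum]; simp [herm]

theorem crossRatio_eq_hermGram (p : Fin 4 → Fin 3 → ℂ) (i j k l : Fin 4) :
    crossRatio (p i) (p j) (p k) (p l) = (hermGram p).crossRatio i j k l :=
  rfl

theorem conj_crossRatio_eq_hermGram (p : Fin 4 → Fin 3 → ℂ) (i j k l : Fin 4) :
    conj (crossRatio (p i) (p j) (p k) (p l)) = (hermGram p)ᵀ.crossRatio i j k l := by
  simp only [crossRatio, map_div₀, map_mul, conj_herm]
  rfl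

theorem crossRatio_relation_two_general
    (p : Fin 4 → Fin 3 → ℂ)
    (hnull : ∀ i, herm (p i) (p i) = 0)
    (hpair : ∀ i j, i ≠ j → herm (p i) (p j) ≠ 0) :
    2 * ‖crossRatio (p 0) (p 1) (p 2) (p 3)‖ ^ 2
        * (crossRatio (p 1) (p 2) (p 0) (p 3)).re
      = ‖crossRatio (p 0) (p 1) (p 2) (p 3)‖ ^ 2
        + ‖crossRatio (p 0) (p 2) (p 1) (p 3)‖ ^ 2
        - 2 * (crossRatio (p 0) (p 1) (p 2) (p 3)
            + crossRatio (p 0) (p 2) (p 1) (p 3)).re + 1 := by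
  have key := (hermGram p).crossRatio_relation hnull (det_hermGram_eq_zero p (by simp)) hpair
  apply Complex.ofReal_injective
  push_cast [← Complex.mul_conj', Complex.re_eq_add_conj]
  simp only [map_add, conj_crossRatio_eq_hermGram]
  simp only [crossRatio_eq_hermGram]
  linear_combination key

theorem crossRatio_relation_two
    (p : Fin 4 → Fin 3 → ℂ)
    (hne : ∀ i, p i ≠ 0)
    (hnull : ∀ i, herm (p i) (p i) = 0)
    (hpair : ∀ i j, i ≠ j → herm (p i) (p j) ≠ 0) :
    2 * ‖crossRatio (p 0) (p 1) (p 2) (p 3)‖ ^ 2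
        * (crossRatio (p 1) (p 2) (p 0) (p 3)).re
      = ‖crossRatio (p 0) (p 1) (p 2) (p 3)‖ ^ 2
        + ‖crossRatio (p 0) (p 2) (p 1) (p 3)‖ ^ 2
        - 2 * (crossRatio (p 0) (p 1) (p 2) (p 3)
            + crossRatio (p 0) (p 2) (p 1) (p 3)).re + 1 :=
  crossRatio_relation_two_general p hnull hpair
end

section
/- Let x₁, x₂, x₃ ∈ ℂ be a point of the cross-ratio variety, i.e. |x₂| = |x₁|·|x₃| and 2|x₁|²·Re(x₃) = |x₁|² + |x₂|² − 2Re(x₁ + x₂) + 1. Then |x₁|^{1/2} + |x₂|^{1/2} ≥ 1 and −1 ≤ |x₁|^{1/2} − |x₂|^{1/2} ≤ 1. -/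
/-! With `a = ‖x₁‖`, `b = ‖x₂‖`, the bounds `a² Re x₃ ≤ a² ‖x₃‖ = ab` and `Re xᵢ ≤ ‖xᵢ‖` turn the
defining equation into `(a + b - 1)² ≤ 4ab`, i.e. `|a + b - 1| ≤ 2√a√b`. The lower half of this
says `(√a + √b)² ≥ 1`, the upper half says `(√a - √b)² ≤ 1`. -/

namespace Real

lemma abs_add_sub_one_le_two_mul_sqrt_mul_sqrt {a b : ℝ} (ha : 0 ≤ a) (hb : 0 ≤ b)
    (h : (a + b - 1) ^ 2 ≤ 4 * a * b) : |a + b - 1| ≤ 2 * √a * √b := by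
  refine abs_le_of_sq_le_sq ?_ (by positivity)
  calc (a + b - 1) ^ 2 ≤ 4 * a * b := h
    _ = (2 * √a * √b) ^ 2 := by rw [mul_pow, mul_pow, sq_sqrt ha, sq_sqrt hb]; ring

lemma one_le_sqrt_add_sqrt_of_one_sub_le {a b : ℝ} (ha : 0 ≤ a) (hb : 0 ≤ b)
    (h : 1 - a - b ≤ 2 * √a * √b) : 1 ≤ √a + √b := by
  have hsq : 1 ≤ (√a + √b) ^ 2 := by
    rw [add_sq, sq_sqrt ha, sq_sqrt hb]; linarith
  nlinarith [sqrt_nonneg a, sqrt_nonneg b]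

lemma abs_sqrt_sub_sqrt_le_one_of_le {a b : ℝ} (ha : 0 ≤ a) (hb : 0 ≤ b)
    (h : a + b - 1 ≤ 2 * √a * √b) : |√a - √b| ≤ 1 := by
  rw [← sq_le_one_iff_abs_le_one, sub_sq, sq_sqrt ha, sq_sqrt hb]
  linarith

end Real

lemma sq_norm_add_norm_sub_one_le_of_cross_ratio {x₁ x₂ x₃ : ℂ}
    (h1 : ‖x₂‖ = ‖x₁‖ * ‖x₃‖)
    (h2 : 2 * ‖x₁‖ ^ 2 * x₃.re = ‖x₁‖ ^ 2 + ‖x₂‖ ^ 2 - 2 * (x₁ + x₂).re + 1) :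
    (‖x₁‖ + ‖x₂‖ - 1) ^ 2 ≤ 4 * ‖x₁‖ * ‖x₂‖ := by
  have hre : 2 * ‖x₁‖ ^ 2 * x₃.re ≤ 2 * ‖x₁‖ * ‖x₂‖ :=
    calc 2 * ‖x₁‖ ^ 2 * x₃.re ≤ 2 * ‖x₁‖ ^ 2 * ‖x₃‖ := by gcongr; exact Complex.re_le_norm x₃
      _ = 2 * ‖x₁‖ * ‖x₂‖ := by rw [h1]; ring
  rw [Complex.add_re] at h2
  linarith [Complex.re_le_norm x₁, Complex.re_le_norm x₂]

theorem ptolemaean_inequality_cross_ratio_variety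
    (x₁ x₂ x₃ : ℂ)
    (h1 : ‖x₂‖ = ‖x₁‖ * ‖x₃‖)
    (h2 : 2 * ‖x₁‖ ^ 2 * x₃.re
      = ‖x₁‖ ^ 2 + ‖x₂‖ ^ 2 - 2 * (x₁ + x₂).re + 1) :
    1 ≤ Real.sqrt (‖x₁‖) + Real.sqrt (‖x₂‖)
    ∧ -1 ≤ Real.sqrt (‖x₁‖) - Real.sqrt (‖x₂‖)
    ∧ Real.sqrt (‖x₁‖) - Real.sqrt (‖x₂‖) ≤ 1 := by
  have ha := norm_nonneg x₁
  have hb := norm_nonneg x₂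
  obtain ⟨hlow, hup⟩ := abs_le.mp <| Real.abs_add_sub_one_le_two_mul_sqrt_mul_sqrt ha hb
    (sq_norm_add_norm_sub_one_le_of_cross_ratio h1 h2)
  exact ⟨Real.one_le_sqrt_add_sqrt_of_one_sub_le ha hb (by linarith),
    abs_le.mp (Real.abs_sqrt_sub_sqrt_le_one_of_le ha hb hup)⟩
end

section
/- (Ptolemaean inequality in the Heisenberg group, first form) For any four points p₁, p₂, p₃, p₄ of the Heisenberg group ℂ × ℝ, the Korányi–Cygan metric satisfies d_K(p₂,p₃)·d_K(p₁,p₄) ≤ d_K(p₂,p₄)·d_K(p₁,p₃) + d_K(p₁,p₂)·d_K(p₃,p₄). -/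
/-- The Korányi–Cygan metric on the Heisenberg group ℂ × ℝ. -/
noncomputable def dK (p q : ℂ × ℝ) : ℝ :=
  Real.sqrt ‖
    ((‖p.1 - q.1‖ : ℂ) ^ 2 - Complex.I * (p.2 : ℂ) + Complex.I * (q.2 : ℂ)
      - 2 * Complex.I * ((p.1 * starRingEnd ℂ q.1).im : ℂ))‖

/-!
Write `dK p q = √|A(p, q)|` with `A(p, q) = |z - w|² - i(t - s) - 2i Im(z w̄)` for `p = (z, t)`,
`q = (w, s)`. The metric is invariant under the left translations of the Heisenberg group, so we
may assume `p₁ = 0`. The Korányi inversion `ι` satisfies `dK(ι p, ι q) = dK(p, q) / (|p| |q|)`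
with `|p| = dK(0, p)`, so Ptolemy's inequality with one vertex at `0` is the triangle inequality
for the inverted remaining three points. The triangle inequality itself comes from the identity
`A(a, b) = A(a, c) + A(c, b) + 2 (z_a - z_c) conj (z_c - z_b)` together with
`|z_a - z_c|² = Re A(a, c) ≤ |A(a, c)|`.
-/

open Complex ComplexConjugate

namespace Heisenberg

def mul (g p : ℂ × ℝ) : ℂ × ℝ := (g.1 + p.1, g.2 + p.2 + 2 * (g.1 * conj p.1).im)

/-- The complex number `A(p, q)` with `dK p q = √‖A(p, q)‖`, in a polynomial form in the
coordinates and their conjugates, so that `ring` can manipulate it. -/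
noncomputable def cygan (p q : ℂ × ℝ) : ℂ :=
  (p.1 - q.1) * conj (p.1 - q.1) + I * ((q.2 : ℂ) - p.2) - (p.1 * conj q.1 - conj p.1 * q.1)

/-- The Korányi inversion; note `cygan 0 p = |p.1|² + i p.2`. -/
noncomputable def inversion (p : ℂ × ℝ) : ℂ × ℝ :=
  (-p.1 / conj (cygan 0 p), -p.2 / normSq (cygan 0 p))

lemma mul_neg_self (p : ℂ × ℝ) : mul (-p) p = 0 := by
  ext <;> simp [mul, mul_conj]

lemma two_I_mul_im (z : ℂ) : 2 * I * (z.im : ℂ) = z - conj z := by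
  rw [sub_conj]; push_cast; ring

lemma cygan_eq (p q : ℂ × ℝ) : cygan p q =
    (‖p.1 - q.1‖ : ℂ) ^ 2 - I * p.2 + I * q.2 - 2 * I * ((p.1 * conj q.1).im : ℂ) := by
  rw [two_I_mul_im, map_mul, conj_conj, ← ofReal_pow, ← normSq_eq_norm_sq, ← mul_conj, cygan]
  ring

lemma dK_eq_sqrt_norm_cygan (p q : ℂ × ℝ) : dK p q = √‖cygan p q‖ := by
  rw [dK, cygan_eq]

lemma dK_nonneg (p q : ℂ × ℝ) : 0 ≤ dK p q := Real.sqrt_nonneg _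

lemma sq_dK (p q : ℂ × ℝ) : dK p q ^ 2 = ‖cygan p q‖ := by
  rw [dK_eq_sqrt_norm_cygan, Real.sq_sqrt (norm_nonneg _)]

lemma re_cygan (p q : ℂ × ℝ) : (cygan p q).re = ‖p.1 - q.1‖ ^ 2 := by
  rw [cygan_eq]; simp [← ofReal_pow]

lemma cygan_comm (p q : ℂ × ℝ) : cygan q p = conj (cygan p q) := by
  simp only [cygan, map_sub, map_add, map_mul, conj_conj, conj_I, conj_ofReal]
  ring

lemma dK_comm (p q : ℂ × ℝ) : dK q p = dK p q := by
  rw [dK_eq_sqrt_norm_cygan, dK_eq_sqrt_norm_cygan, cygan_comm, norm_conj]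

lemma cygan_self (p : ℂ × ℝ) : cygan p p = 0 := by
  simp only [cygan]; ring

lemma dK_self (p : ℂ × ℝ) : dK p p = 0 := by
  rw [dK_eq_sqrt_norm_cygan, cygan_self, norm_zero, Real.sqrt_zero]

lemma cygan_eq_zero_iff {p q : ℂ × ℝ} : cygan p q = 0 ↔ p = q := by
  refine ⟨fun h => ?_, fun h => h ▸ cygan_self p⟩
  have hz : p.1 = q.1 := by
    have hre := re_cygan p q
    rwa [h, zero_re, eq_comm, sq_eq_zero_iff, norm_eq_zero, sub_eq_zero] at hre
  have hA : cygan p q = I * ((q.2 - p.2 : ℝ) : ℂ) := by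
    rw [cygan, hz]; push_cast; ring
  rw [h, eq_comm, mul_eq_zero, ofReal_eq_zero, sub_eq_zero] at hA
  exact Prod.ext hz (hA.resolve_left I_ne_zero).symm

lemma dK_pos {p q : ℂ × ℝ} (h : p ≠ q) : 0 < dK p q := by
  rw [dK_eq_sqrt_norm_cygan, Real.sqrt_pos, norm_pos_iff]
  exact cygan_eq_zero_iff.not.2 h

lemma norm_sub_fst_le_dK (p q : ℂ × ℝ) : ‖p.1 - q.1‖ ≤ dK p q := by
  rw [dK_eq_sqrt_norm_cygan, Real.le_sqrt (norm_nonneg _) (norm_nonneg _), ← re_cygan]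
  exact re_le_norm _

lemma cygan_eq_add (a b c : ℂ × ℝ) :
    cygan a b = cygan a c + cygan c b + 2 * (a.1 - c.1) * conj (c.1 - b.1) := by
  simp only [cygan, map_sub]; ring

lemma dK_triangle (a b c : ℂ × ℝ) : dK a b ≤ dK a c + dK c b := by
  rw [dK_eq_sqrt_norm_cygan a b, Real.sqrt_le_left (add_nonneg (dK_nonneg _ _) (dK_nonneg _ _)),
    cygan_eq_add a b c]
  have hac := norm_sub_fst_le_dK a c
  have hcb := norm_sub_fst_le_dK c b
  calc ‖cygan a c + cygan c b + 2 * (a.1 - c.1) * conj (c.1 - b.1)‖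
      ≤ ‖cygan a c‖ + ‖cygan c b‖ + 2 * ‖a.1 - c.1‖ * ‖c.1 - b.1‖ := by
        refine (norm_add_le _ _).trans (add_le_add (norm_add_le _ _) ?_)
        rw [norm_mul, norm_mul, norm_conj, Complex.norm_ofNat]
    _ ≤ dK a c ^ 2 + dK c b ^ 2 + 2 * dK a c * dK c b := by
        have := mul_le_mul hac hcb (norm_nonneg _) (dK_nonneg _ _)
        rw [sq_dK, sq_dK]
        linarith
    _ = (dK a c + dK c b) ^ 2 := by ring

lemma cygan_mul_mul (g p q : ℂ × ℝ) : cygan (mul g p) (mul g q) = cygan p q := by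
  have hp := two_I_mul_im (g.1 * conj p.1)
  have hq := two_I_mul_im (g.1 * conj q.1)
  simp only [cygan, mul, map_add, map_sub, map_mul, conj_conj] at hp hq ⊢
  push_cast
  linear_combination hq - hp

lemma dK_mul_mul (g p q : ℂ × ℝ) : dK (mul g p) (mul g q) = dK p q := by
  rw [dK_eq_sqrt_norm_cygan, dK_eq_sqrt_norm_cygan, cygan_mul_mul]

lemma cygan_zero_left (p : ℂ × ℝ) : cygan 0 p = p.1 * conj p.1 + I * p.2 := by
  simp [cygan]

lemma conj_cygan_zero_left (p : ℂ × ℝ) : conj (cygan 0 p) = p.1 * conj p.1 - I * p.2 := by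
  rw [cygan_zero_left, map_add, map_mul, map_mul, conj_conj, conj_I, conj_ofReal]
  ring

lemma cygan_inversion (p q : ℂ × ℝ) (hp : cygan 0 p ≠ 0) (hq : cygan 0 q ≠ 0) :
    cygan (inversion p) (inversion q) = cygan p q / (conj (cygan 0 p) * cygan 0 q) := by
  have hp' : conj (cygan 0 p) ≠ 0 := (map_ne_zero _).2 hp
  have hq' : conj (cygan 0 q) ≠ 0 := (map_ne_zero _).2 hq
  have hNp := cygan_zero_left p
  have hNq := cygan_zero_left q
  have hNp' := conj_cygan_zero_left p
  have hNq' := conj_cygan_zero_left q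
  rw [inversion, inversion, cygan]
  push_cast
  simp only [← mul_conj, map_sub, map_neg, map_div₀, conj_conj]
  -- clear denominators with `cygan 0 _` and its conjugate as opaque nonzero atoms, then expand
  generalize cygan 0 p = Np at *
  generalize cygan 0 q = Nq at *
  generalize conj Np = Np' at *
  generalize conj Nq = Nq' at *
  field_simp
  subst hNp hNq hNp' hNq'
  simp only [cygan, map_sub]
  ring

lemma dK_inversion {p q : ℂ × ℝ} (hp : p ≠ 0) (hq : q ≠ 0) :
    dK (inversion p) (inversion q) = dK p q / (dK 0 p * dK 0 q) := by
  simp only [dK_eq_sqrt_norm_cygan, cygan_inversion p q (cygan_eq_zero_iff.not.2 hp.symm)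
    (cygan_eq_zero_iff.not.2 hq.symm), norm_div, norm_mul, norm_conj,
    Real.sqrt_div' _ (mul_nonneg (norm_nonneg _) (norm_nonneg _)), Real.sqrt_mul (norm_nonneg _)]

lemma dK_mul_dK_zero_le (a b c : ℂ × ℝ) :
    dK a b * dK 0 c ≤ dK a c * dK 0 b + dK 0 a * dK b c := by
  rcases eq_or_ne a 0 with rfl | ha
  · rw [dK_self, zero_mul, add_zero, mul_comm]
  rcases eq_or_ne b 0 with rfl | hb
  · rw [dK_self, mul_zero, zero_add, dK_comm a 0]
  rcases eq_or_ne c 0 with rfl | hc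
  · rw [dK_self, mul_zero]
    exact add_nonneg (mul_nonneg (dK_nonneg _ _) (dK_nonneg _ _))
      (mul_nonneg (dK_nonneg _ _) (dK_nonneg _ _))
  have ha' := dK_pos ha.symm
  have hb' := dK_pos hb.symm
  have hc' := dK_pos hc.symm
  have hinv := dK_triangle (inversion a) (inversion b) (inversion c)
  rw [dK_inversion ha hb, dK_inversion ha hc, dK_inversion hc hb, dK_comm b c] at hinv
  calc dK a b * dK 0 c = dK 0 a * dK 0 b * dK 0 c * (dK a b / (dK 0 a * dK 0 b)) := by
        field_simp
    _ ≤ dK 0 a * dK 0 b * dK 0 c * (dK a c / (dK 0 a * dK 0 c) + dK b c / (dK 0 c * dK 0 b)) :=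
        mul_le_mul_of_nonneg_left hinv (by positivity)
    _ = dK a c * dK 0 b + dK 0 a * dK b c := by
        field_simp

end Heisenberg

theorem ptolemaean_inequality_heisenberg_first (p₁ p₂ p₃ p₄ : ℂ × ℝ) :
    dK p₂ p₃ * dK p₁ p₄ ≤ dK p₂ p₄ * dK p₁ p₃ + dK p₁ p₂ * dK p₃ p₄ := by
  have h := Heisenberg.dK_mul_dK_zero_le (Heisenberg.mul (-p₁) p₂) (Heisenberg.mul (-p₁) p₃)
    (Heisenberg.mul (-p₁) p₄)
  simpa only [← Heisenberg.mul_neg_self p₁, Heisenberg.dK_mul_mul] using h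
end

section
/- (Ptolemaean inequality in the Heisenberg group, third form) For any four points p₁, p₂, p₃, p₄ of the Heisenberg group ℂ × ℝ, the Korányi–Cygan metric satisfies d_K(p₁,p₂)·d_K(p₃,p₄) ≤ d_K(p₁,p₃)·d_K(p₂,p₄) + d_K(p₂,p₃)·d_K(p₁,p₄). -/
/-!
Write `A p q = |z|² + |w|² - 2 z w̄ - i t + i s` for `p = (z, t)`, `q = (w, s)`, so that
`dK p q = √‖A p q‖`. Fixing `p₃, p₄`, a polynomial identity expresses `A₁₂ ‖A₃₄‖²` as
`A₁₃ Ā₂₄ A₃₄ + Ā₂₃ A₁₄ Ā₃₄ - 2 D₁ D̄₂`, where `D_i = (z_i - z₄) A₃₄ - (z₃ - z₄) A_{i4}`.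
Specialising the identity to `p₂ = p₁`, where `A₁₁ = 0`, gives `‖D_i‖² = Re (A_{i3} Ā_{i4} A₃₄)`,
hence `‖D_i‖² ≤ ‖A_{i3}‖ ‖A_{i4}‖ ‖A₃₄‖`. The triangle inequality then yields
`‖A₁₂‖ ‖A₃₄‖ ≤ (√(‖A₁₃‖ ‖A₂₄‖) + √(‖A₂₃‖ ‖A₁₄‖))²`, whose square root is the inequality.
-/

lemma Real.sqrt_le_sqrt_add_sqrt_of_le {a b c : ℝ} (hb : 0 ≤ b) (hc : 0 ≤ c)
    (h : a ≤ b + c + 2 * √(b * c)) : √a ≤ √b + √c := by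
  rw [Real.sqrt_mul hb] at h
  rw [Real.sqrt_le_left (by positivity)]
  linarith [Real.sq_sqrt hb, Real.sq_sqrt hc]

namespace KoranyiCygan

open Complex ComplexConjugate

noncomputable def cyganForm (p q : ℂ × ℝ) : ℂ :=
  p.1 * conj p.1 + q.1 * conj q.1 - 2 * p.1 * conj q.1 - I * p.2 + I * q.2

noncomputable def cyganDet (p₁ p₂ p₃ : ℂ × ℝ) : ℂ :=
  (p₁.1 - p₃.1) * cyganForm p₂ p₃ - (p₂.1 - p₃.1) * cyganForm p₁ p₃

lemma dK_eq_sqrt_norm_cyganForm (p q : ℂ × ℝ) : dK p q = √‖cyganForm p q‖ := by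
  unfold dK
  congr 2
  rw [im_eq_sub_conj, ← ofReal_pow, Complex.sq_norm, ← mul_conj, mul_div_assoc',
    mul_div_cancel_left₀ _ (mul_ne_zero two_ne_zero I_ne_zero)]
  simp only [cyganForm, map_sub, map_mul, conj_conj]
  ring

lemma cyganForm_self (p : ℂ × ℝ) : cyganForm p p = 0 := by
  simp only [cyganForm]
  ring

lemma cyganForm_mul_normSq_eq (p₁ p₂ p₃ p₄ : ℂ × ℝ) :
    cyganForm p₁ p₂ * (cyganForm p₃ p₄ * conj (cyganForm p₃ p₄)) =
      cyganForm p₁ p₃ * conj (cyganForm p₂ p₄) * cyganForm p₃ p₄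
        + conj (cyganForm p₂ p₃) * cyganForm p₁ p₄ * conj (cyganForm p₃ p₄)
        - 2 * cyganDet p₁ p₃ p₄ * conj (cyganDet p₂ p₃ p₄) := by
  simp only [cyganDet, cyganForm, map_sub, map_add, map_mul, map_ofNat, conj_conj, conj_I,
    conj_ofReal]
  ring

lemma norm_cyganDet_sq_le (p₁ p₃ p₄ : ℂ × ℝ) :
    ‖cyganDet p₁ p₃ p₄‖ ^ 2 ≤ ‖cyganForm p₁ p₃‖ * ‖cyganForm p₁ p₄‖ * ‖cyganForm p₃ p₄‖ := by
  set w := cyganForm p₁ p₃ * conj (cyganForm p₁ p₄) * cyganForm p₃ p₄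
  have hw : w + conj w = 2 * (cyganDet p₁ p₃ p₄ * conj (cyganDet p₁ p₃ p₄)) := by
    have h := cyganForm_mul_normSq_eq p₁ p₁ p₃ p₄
    simp only [cyganForm_self, zero_mul, w, map_mul, conj_conj] at h ⊢
    linear_combination -h
  have hre : w.re = ‖cyganDet p₁ p₃ p₄‖ ^ 2 := by
    have h := congrArg re hw
    rw [mul_conj, add_re, conj_re, ← Complex.sq_norm, ← ofReal_ofNat, ← ofReal_mul,
      ofReal_re] at h
    linarith
  calc ‖cyganDet p₁ p₃ p₄‖ ^ 2 = w.re := hre.symm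
    _ ≤ ‖w‖ := re_le_norm w
    _ = _ := by simp only [w, norm_mul, norm_conj]

lemma norm_cyganForm_mul_sq_le (p₁ p₂ p₃ p₄ : ℂ × ℝ) :
    ‖cyganForm p₁ p₂‖ * ‖cyganForm p₃ p₄‖ ^ 2 ≤
      ‖cyganForm p₁ p₃‖ * ‖cyganForm p₂ p₄‖ * ‖cyganForm p₃ p₄‖
        + ‖cyganForm p₂ p₃‖ * ‖cyganForm p₁ p₄‖ * ‖cyganForm p₃ p₄‖
        + 2 * (‖cyganDet p₁ p₃ p₄‖ * ‖cyganDet p₂ p₃ p₄‖) := by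
  have h := congrArg norm (cyganForm_mul_normSq_eq p₁ p₂ p₃ p₄)
  rw [mul_conj, norm_mul, norm_real, Real.norm_of_nonneg (normSq_nonneg _),
    normSq_eq_norm_sq] at h
  rw [h]
  refine (norm_sub_le _ _).trans ?_
  grw [norm_add_le]
  simp only [norm_mul, norm_conj, Complex.norm_two]
  exact le_of_eq (by ring)

lemma norm_cyganDet_mul_le (p₁ p₂ p₃ p₄ : ℂ × ℝ) :
    ‖cyganDet p₁ p₃ p₄‖ * ‖cyganDet p₂ p₃ p₄‖ ≤ ‖cyganForm p₃ p₄‖ *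
      √(‖cyganForm p₁ p₃‖ * ‖cyganForm p₂ p₄‖ * (‖cyganForm p₂ p₃‖ * ‖cyganForm p₁ p₄‖)) := by
  rw [← Real.sqrt_sq (norm_nonneg (cyganForm p₃ p₄)), ← Real.sqrt_mul (sq_nonneg _),
    Real.le_sqrt (by positivity) (by positivity), mul_pow]
  calc ‖cyganDet p₁ p₃ p₄‖ ^ 2 * ‖cyganDet p₂ p₃ p₄‖ ^ 2
      ≤ (‖cyganForm p₁ p₃‖ * ‖cyganForm p₁ p₄‖ * ‖cyganForm p₃ p₄‖)
        * (‖cyganForm p₂ p₃‖ * ‖cyganForm p₂ p₄‖ * ‖cyganForm p₃ p₄‖) :=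
      mul_le_mul (norm_cyganDet_sq_le p₁ p₃ p₄) (norm_cyganDet_sq_le p₂ p₃ p₄) (by positivity)
        (by positivity)
    _ = _ := by ring

lemma norm_cyganForm_mul_le (p₁ p₂ p₃ p₄ : ℂ × ℝ) :
    ‖cyganForm p₁ p₂‖ * ‖cyganForm p₃ p₄‖ ≤
      ‖cyganForm p₁ p₃‖ * ‖cyganForm p₂ p₄‖ + ‖cyganForm p₂ p₃‖ * ‖cyganForm p₁ p₄‖
        + 2 * √(‖cyganForm p₁ p₃‖ * ‖cyganForm p₂ p₄‖
          * (‖cyganForm p₂ p₃‖ * ‖cyganForm p₁ p₄‖)) := by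
  rcases (norm_nonneg (cyganForm p₃ p₄)).eq_or_lt with h₀ | hpos
  · rw [← h₀, mul_zero]
    positivity
  refine le_of_mul_le_mul_left ?_ hpos
  linarith [norm_cyganForm_mul_sq_le p₁ p₂ p₃ p₄, norm_cyganDet_mul_le p₁ p₂ p₃ p₄]

end KoranyiCygan

theorem ptolemaean_inequality_heisenberg_third (p₁ p₂ p₃ p₄ : ℂ × ℝ) :
    dK p₁ p₂ * dK p₃ p₄ ≤ dK p₁ p₃ * dK p₂ p₄ + dK p₂ p₃ * dK p₁ p₄ := by
  simp only [KoranyiCygan.dK_eq_sqrt_norm_cyganForm, ← Real.sqrt_mul (norm_nonneg _)]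
  exact Real.sqrt_le_sqrt_add_sqrt_of_le (by positivity) (by positivity)
    (KoranyiCygan.norm_cyganForm_mul_le p₁ p₂ p₃ p₄)
end

section
/- Let p₁, p₂, p₃, p₄ ∈ ℂ³ be nonzero null vectors (⟨pᵢ,pᵢ⟩ = 0) whose pairwise Hermitian pairings are nonzero (⟨pᵢ,pⱼ⟩ ≠ 0 for i ≠ j), and set 𝕏₁ = 𝕏(p₁,p₂,p₃,p₄), 𝕏₂ = 𝕏(p₁,p₃,p₂,p₄), 𝕏₃ = 𝕏(p₂,p₃,p₁,p₄). If one of the equalities |𝕏₁|^{1/2} + |𝕏₂|^{1/2} = 1, |𝕏₁|^{1/2} − |𝕏₂|^{1/2} = 1, or |𝕏₂|^{1/2} − |𝕏₁|^{1/2} = 1 holds, then 𝕏₁, 𝕏₂, and 𝕏₃ are all positive real numbers. -/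
open ComplexConjugate
open scoped ComplexOrder

theorem herm_swap (z w : Fin 3 → ℂ) : herm w z = conj (herm z w) := by
  simp only [herm, map_add, map_mul, Complex.conj_conj]
  ring

theorem herm_eq_sum (z w : Fin 3 → ℂ) : herm z w = ∑ k, z k * conj (w k.rev) := by
  simp [herm, Fin.sum_univ_three]

theorem Matrix.det_mul_eq_zero_of_card_lt {R m n : Type*} [Field R] [Fintype m] [Fintype n]
    [DecidableEq n] (A : Matrix n m R) (B : Matrix m n R) (h : Fintype.card m < Fintype.card n) :
    (A * B).det = 0 := by
  by_contra hdet
  have hrank := (A * B).rank_of_isUnit ((Matrix.isUnit_iff_isUnit_det _).mpr (Ne.isUnit hdet))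
  have := (A.rank_mul_le_left B).trans A.rank_le_card_width
  omega

theorem det_gram_eq_zero {ι : Type*} [Fintype ι] [DecidableEq ι] (p : ι → Fin 3 → ℂ)
    (h : 3 < Fintype.card ι) : (Matrix.of fun i j => herm (p i) (p j)).det = 0 := by
  have hgram : (Matrix.of fun i j => herm (p i) (p j)) =
      (Matrix.of p : Matrix ι (Fin 3) ℂ) *
        (Matrix.of fun k j => conj (p j k.rev) : Matrix (Fin 3) ι ℂ) := by
    ext i j
    simp [Matrix.mul_apply, herm_eq_sum]
  rw [hgram]
  exact Matrix.det_mul_eq_zero_of_card_lt _ _ (by simpa using h)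

theorem Matrix.det_fin_four_of_diag_eq_zero_s17 {R : Type*} [CommRing R]
    (G : Matrix (Fin 4) (Fin 4) R) (h : ∀ i, G i i = 0) : G.det =
      G 0 1 * G 1 0 * G 2 3 * G 3 2 + G 0 2 * G 2 0 * G 1 3 * G 3 1
      + G 0 3 * G 3 0 * G 1 2 * G 2 1
      - G 0 1 * G 1 2 * G 2 3 * G 3 0 - G 0 1 * G 1 3 * G 3 2 * G 2 0
      - G 0 2 * G 2 1 * G 1 3 * G 3 0 - G 0 2 * G 2 3 * G 3 1 * G 1 0
      - G 0 3 * G 3 1 * G 1 2 * G 2 0 - G 0 3 * G 3 2 * G 2 1 * G 1 0 := by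
  rw [Matrix.det_succ_row_zero]
  simp only [Fin.sum_univ_four, Matrix.det_fin_three, Matrix.submatrix_apply, Fin.succAbove,
    Fin.reduceSucc, Fin.reduceCastSucc, Fin.reduceLT, ite_true, ite_false, h, Fin.coe_ofNat_eq_mod]
  ring

section FourNullVectors

variable (p : Fin 4 → Fin 3 → ℂ)

local notation "𝕏₁" => crossRatio (p 0) (p 1) (p 2) (p 3)
local notation "𝕏₂" => crossRatio (p 0) (p 2) (p 1) (p 3)
local notation "𝕏₃" => crossRatio (p 1) (p 2) (p 0) (p 3)

theorem crossRatio_falbel_identity (hnull : ∀ i, herm (p i) (p i) = 0)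
    (hpair : ∀ i j, i ≠ j → herm (p i) (p j) ≠ 0) :
    𝕏₁ * conj 𝕏₁ * (𝕏₃ + conj 𝕏₃) =
      𝕏₁ * conj 𝕏₁ + 𝕏₂ * conj 𝕏₂ + 1 - (𝕏₁ + conj 𝕏₁) - (𝕏₂ + conj 𝕏₂) := by
  have hdet := det_gram_eq_zero p (by simp)
  rw [Matrix.det_fin_four_of_diag_eq_zero_s17 _ hnull] at hdet
  simp only [Matrix.of_apply] at hdet
  have h02 := hpair 0 2 (by decide)
  have h03 := hpair 0 3 (by decide)
  have h12 := hpair 1 2 (by decide)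
  have h13 := hpair 1 3 (by decide)
  have h20 := hpair 2 0 (by decide)
  have h21 := hpair 2 1 (by decide)
  have h30 := hpair 3 0 (by decide)
  have h31 := hpair 3 1 (by decide)
  simp only [crossRatio, map_div₀, map_mul, ← herm_swap]
  field_simp
  linear_combination -hdet

theorem crossRatio_falbel_identity_re (hnull : ∀ i, herm (p i) (p i) = 0)
    (hpair : ∀ i j, i ≠ j → herm (p i) (p j) ≠ 0) :
    2 * ‖𝕏₁‖ ^ 2 * (𝕏₃).re = ‖𝕏₁‖ ^ 2 + ‖𝕏₂‖ ^ 2 + 1 - 2 * (𝕏₁).re - 2 * (𝕏₂).re := by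
  have h := crossRatio_falbel_identity p hnull hpair
  simp only [Complex.mul_conj, Complex.add_conj, Complex.normSq_eq_norm_sq] at h
  have h' : ‖𝕏₁‖ ^ 2 * (2 * (𝕏₃).re) =
      ‖𝕏₁‖ ^ 2 + ‖𝕏₂‖ ^ 2 + 1 - 2 * (𝕏₁).re - 2 * (𝕏₂).re := by
    exact_mod_cast h
  linarith

theorem norm_crossRatio_mul_norm_crossRatio (h₀₂ : herm (p 0) (p 2) ≠ 0)
    (h₃₁ : herm (p 3) (p 1) ≠ 0) : ‖𝕏₁‖ * ‖𝕏₃‖ = ‖𝕏₂‖ := by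
  have h₂₀ : ‖herm (p 2) (p 0)‖ = ‖herm (p 0) (p 2)‖ := by rw [herm_swap, Complex.norm_conj]
  have h₀₁ : ‖herm (p 0) (p 1)‖ = ‖herm (p 1) (p 0)‖ := by rw [herm_swap, Complex.norm_conj]
  have h₁₂ : ‖herm (p 1) (p 2)‖ = ‖herm (p 2) (p 1)‖ := by rw [herm_swap, Complex.norm_conj]
  simp only [crossRatio, norm_div, norm_mul, h₂₀, h₀₁, h₁₂]
  have := norm_ne_zero_iff.2 h₀₂
  have := norm_ne_zero_iff.2 h₃₁
  field_simp

theorem crossRatio_ne_zero (hpair : ∀ i j, i ≠ j → herm (p i) (p j) ≠ 0) {i j k l : Fin 4}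
    (hki : k ≠ i) (hlj : l ≠ j) (hli : l ≠ i) (hkj : k ≠ j) :
    crossRatio (p i) (p j) (p k) (p l) ≠ 0 :=
  div_ne_zero (mul_ne_zero (hpair k i hki) (hpair l j hlj))
    (mul_ne_zero (hpair l i hli) (hpair k j hkj))

end FourNullVectors

theorem sq_add_sq_add_one_eq_of_sqrt {x y : ℝ} (hx : 0 ≤ x) (hy : 0 ≤ y)
    (h : √x + √y = 1 ∨ √x - √y = 1 ∨ √y - √x = 1) :
    x ^ 2 + y ^ 2 + 1 = 2 * x + 2 * y + 2 * (x * y) := by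
  rw [← Real.sq_sqrt hx, ← Real.sq_sqrt hy]
  rcases h with h | h | h
  · linear_combination (((√x - √y) ^ 2 - 1) * (√x + √y + 1)) * h
  · linear_combination (((√x + √y) ^ 2 - 1) * (√x - √y + 1)) * h
  · linear_combination (((√x + √y) ^ 2 - 1) * (√y - √x + 1)) * h

theorem pos_of_falbel_identity {z₁ z₂ z₃ : ℂ} (h₁ : z₁ ≠ 0) (h₂ : z₂ ≠ 0) (h₃ : z₃ ≠ 0)
    (hnorm : ‖z₁‖ * ‖z₃‖ = ‖z₂‖)
    (hfalbel : 2 * ‖z₁‖ ^ 2 * z₃.re = ‖z₁‖ ^ 2 + ‖z₂‖ ^ 2 + 1 - 2 * z₁.re - 2 * z₂.re)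
    (hext : ‖z₁‖ ^ 2 + ‖z₂‖ ^ 2 + 1 = 2 * ‖z₁‖ + 2 * ‖z₂‖ + 2 * (‖z₁‖ * ‖z₂‖)) :
    0 < z₁ ∧ 0 < z₂ ∧ 0 < z₃ := by
  have hre₃ : ‖z₁‖ ^ 2 * z₃.re ≤ ‖z₁‖ ^ 2 * ‖z₃‖ :=
    mul_le_mul_of_nonneg_left (Complex.re_le_norm z₃) (sq_nonneg _)
  have hxy : ‖z₁‖ * ‖z₂‖ = ‖z₁‖ ^ 2 * ‖z₃‖ := by rw [← hnorm]; ring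
  have e₁ : z₁.re = ‖z₁‖ := by linarith [Complex.re_le_norm z₁, Complex.re_le_norm z₂]
  have e₂ : z₂.re = ‖z₂‖ := by linarith [Complex.re_le_norm z₁, Complex.re_le_norm z₂]
  have e₃ : z₃.re = ‖z₃‖ := by
    refine mul_left_cancel₀ (pow_ne_zero 2 (norm_ne_zero_iff.2 h₁)) ?_
    linarith [Complex.re_le_norm z₁, Complex.re_le_norm z₂]
  exact ⟨(Complex.re_eq_norm.1 e₁).lt_of_ne' h₁, (Complex.re_eq_norm.1 e₂).lt_of_ne' h₂,
    (Complex.re_eq_norm.1 e₃).lt_of_ne' h₃⟩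

theorem crossRatios_positive_of_equality_general
    (p : Fin 4 → Fin 3 → ℂ)
    (hnull : ∀ i, herm (p i) (p i) = 0)
    (hpair : ∀ i j, i ≠ j → herm (p i) (p j) ≠ 0)
    (heq : Real.sqrt (‖crossRatio (p 0) (p 1) (p 2) (p 3)‖)
          + Real.sqrt (‖crossRatio (p 0) (p 2) (p 1) (p 3)‖) = 1
      ∨ Real.sqrt (‖crossRatio (p 0) (p 1) (p 2) (p 3)‖)
          - Real.sqrt (‖crossRatio (p 0) (p 2) (p 1) (p 3)‖) = 1
      ∨ Real.sqrt (‖crossRatio (p 0) (p 2) (p 1) (p 3)‖)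
          - Real.sqrt (‖crossRatio (p 0) (p 1) (p 2) (p 3)‖) = 1) :
    ((crossRatio (p 0) (p 1) (p 2) (p 3)).im = 0
        ∧ 0 < (crossRatio (p 0) (p 1) (p 2) (p 3)).re)
    ∧ ((crossRatio (p 0) (p 2) (p 1) (p 3)).im = 0
        ∧ 0 < (crossRatio (p 0) (p 2) (p 1) (p 3)).re)
    ∧ ((crossRatio (p 1) (p 2) (p 0) (p 3)).im = 0
        ∧ 0 < (crossRatio (p 1) (p 2) (p 0) (p 3)).re) := by
  have im_eq_zero_and_re_pos {z : ℂ} (hz : 0 < z) : z.im = 0 ∧ 0 < z.re :=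
    ⟨(Complex.pos_iff.1 hz).2.symm, (Complex.pos_iff.1 hz).1⟩
  obtain ⟨h₁, h₂, h₃⟩ := pos_of_falbel_identity
    (crossRatio_ne_zero p hpair (by decide) (by decide) (by decide) (by decide))
    (crossRatio_ne_zero p hpair (by decide) (by decide) (by decide) (by decide))
    (crossRatio_ne_zero p hpair (by decide) (by decide) (by decide) (by decide))
    (norm_crossRatio_mul_norm_crossRatio p (hpair 0 2 (by decide)) (hpair 3 1 (by decide)))
    (crossRatio_falbel_identity_re p hnull hpair)
    (sq_add_sq_add_one_eq_of_sqrt (norm_nonneg _) (norm_nonneg _) heq)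
  exact ⟨im_eq_zero_and_re_pos h₁, im_eq_zero_and_re_pos h₂, im_eq_zero_and_re_pos h₃⟩

theorem crossRatios_positive_of_equality
    (p : Fin 4 → Fin 3 → ℂ)
    (hne : ∀ i, p i ≠ 0)
    (hnull : ∀ i, herm (p i) (p i) = 0)
    (hpair : ∀ i j, i ≠ j → herm (p i) (p j) ≠ 0)
    (heq : Real.sqrt (‖crossRatio (p 0) (p 1) (p 2) (p 3)‖)
          + Real.sqrt (‖crossRatio (p 0) (p 2) (p 1) (p 3)‖) = 1
      ∨ Real.sqrt (‖crossRatio (p 0) (p 1) (p 2) (p 3)‖)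
          - Real.sqrt (‖crossRatio (p 0) (p 2) (p 1) (p 3)‖) = 1
      ∨ Real.sqrt (‖crossRatio (p 0) (p 2) (p 1) (p 3)‖)
          - Real.sqrt (‖crossRatio (p 0) (p 1) (p 2) (p 3)‖) = 1) :
    ((crossRatio (p 0) (p 1) (p 2) (p 3)).im = 0
        ∧ 0 < (crossRatio (p 0) (p 1) (p 2) (p 3)).re)
    ∧ ((crossRatio (p 0) (p 2) (p 1) (p 3)).im = 0
        ∧ 0 < (crossRatio (p 0) (p 2) (p 1) (p 3)).re)
    ∧ ((crossRatio (p 1) (p 2) (p 0) (p 3)).im = 0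
        ∧ 0 < (crossRatio (p 1) (p 2) (p 0) (p 3)).re) :=
  crossRatios_positive_of_equality_general p hnull hpair heq
end
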